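/- arXiv:2308.15702 — 3 statements merged into one kernel-verified Lean document; each statement's English description precedes it below -/
import Mathlib

section
/- Let K be a simplicial complex on a finite totally ordered vertex set with at least one ghost vertex. Then HH_n^l(Z_K) = 0 for all integers n and l; equivalently, for each n the cochain complex (CH_n^*(Z_K), d) is acyclic. -/
set_option maxHeartbeats 1000000
set_option synthInstance.maxHeartbeats 1000000

open scoped DirectSum

namespace DH

/-- An abstract simplicial complex on the finite (totally ordered) vertex set `S ⊆ ℕ`:
a collection of subsets of `S` containing `∅` and closed under taking subsets. -/
structure SComplex (S : Finset ℕ) : Type where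
  faces : Set (Finset ℕ)
  empty_mem : ∅ ∈ faces
  faces_subset : ∀ ⦃σ : Finset ℕ⦄, σ ∈ faces → σ ⊆ S
  down_closed : ∀ ⦃σ τ : Finset ℕ⦄, σ ∈ faces → τ ⊆ σ → τ ∈ faces

variable {S : Finset ℕ}

/-- `K` has no ghost vertices: every vertex of `S` is a face. -/
def NoGhosts (K : SComplex S) : Prop := ∀ x ∈ S, ({x} : Finset ℕ) ∈ K.faces

/-- The full subcomplex `K_J = {σ ∩ J : σ ∈ K}`. -/
def SComplex.restrict (K : SComplex S) (J : Finset ℕ) : SComplex S where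
  faces := {τ | ∃ σ ∈ K.faces, τ = σ ∩ J}
  empty_mem := ⟨∅, K.empty_mem, by simp⟩
  faces_subset := by
    rintro τ ⟨σ, hσ, rfl⟩
    exact Finset.inter_subset_left.trans (K.faces_subset hσ)
  down_closed := by
    rintro σ' τ ⟨σ, hσ, rfl⟩ hτ
    refine ⟨τ, K.down_closed hσ (hτ.trans Finset.inter_subset_left), ?_⟩
    exact (Finset.inter_eq_left.mpr (hτ.trans Finset.inter_subset_right)).symm

/-- The full simplex `⟨ρ⟩` on a vertex set `ρ ⊆ S`, viewed as a complex on `S`. -/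
def simplexOn (ρ : Finset ℕ) (h : ρ ⊆ S) : SComplex S where
  faces := {τ | τ ⊆ ρ}
  empty_mem := Finset.empty_subset ρ
  faces_subset := fun _ hσ => hσ.trans h
  down_closed := fun _ _ hσ hτ => hτ.trans hσ

/-- Union of two simplicial complexes on the same vertex set. -/
def SComplex.union (K1 K2 : SComplex S) : SComplex S where
  faces := K1.faces ∪ K2.faces
  empty_mem := Or.inl K1.empty_mem
  faces_subset := by
    rintro σ (h | h)
    exacts [K1.faces_subset h, K2.faces_subset h]
  down_closed := by
    rintro σ τ (h | h) hτ
    exacts [Or.inl (K1.down_closed h hτ), Or.inr (K2.down_closed h hτ)]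

/-- `K = K¹ ⊔_σ K²` : `K` is the face sum of `K¹` and `K²` along the
(possibly empty) face `σ`, which is a proper face of both. -/
structure IsFaceSum (K K1 K2 : SComplex S) (σ : Finset ℕ) : Prop where
  union : K.faces = K1.faces ∪ K2.faces
  inter : K1.faces ∩ K2.faces = {τ : Finset ℕ | τ ⊆ σ}
  mem1 : σ ∈ K1.faces
  mem2 : σ ∈ K2.faces
  proper1 : K1.faces ≠ {τ : Finset ℕ | τ ⊆ σ}
  proper2 : K2.faces ≠ {τ : Finset ℕ | τ ⊆ σ}

/-- `K` is wedge-decomposable if it is a face sum `K¹ ⊔_σ K²`. -/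
def WedgeDecomposable (K : SComplex S) : Prop :=
  ∃ K1 K2 : SComplex S, ∃ σ : Finset ℕ, IsFaceSum K K1 K2 σ

lemma IsFaceSum.le1 {K K1 K2 : SComplex S} {σ : Finset ℕ} (h : IsFaceSum K K1 K2 σ) :
    K1.faces ⊆ K.faces := h.union ▸ Set.subset_union_left

lemma IsFaceSum.le2 {K K1 K2 : SComplex S} {σ : Finset ℕ} (h : IsFaceSum K K1 K2 σ) :
    K2.faces ⊆ K.faces := h.union ▸ Set.subset_union_right

open Classical in
/-- The effective vertex set `V(K)`: the set of non-ghost vertices. -/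
noncomputable def effVerts (K : SComplex S) : Finset ℕ :=
  S.filter (fun x => ({x} : Finset ℕ) ∈ K.faces)

open Classical in
/-- The set of ghost vertices of `K`. -/
noncomputable def ghostVerts (K : SComplex S) : Finset ℕ :=
  S.filter (fun x => ({x} : Finset ℕ) ∉ K.faces)

open Classical in
lemma effVerts_subset (K : SComplex S) : effVerts K ⊆ S := Finset.filter_subset _ _

open Classical in
lemma face_subset_effVerts (K : SComplex S) {σ : Finset ℕ} (h : σ ∈ K.faces) :
    σ ⊆ effVerts K := by
  intro x hx
  rw [effVerts, Finset.mem_filter]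
  exact ⟨K.faces_subset h hx, K.down_closed h (Finset.singleton_subset_iff.mpr hx)⟩

/-- `L = ⟨V(K¹)⟩ ⊔_σ ⟨V(K²)⟩`, the face sum of the full simplices on the
effective vertex sets. -/
noncomputable def wedgeL (K1 K2 : SComplex S) : SComplex S :=
  (simplexOn (effVerts K1) (effVerts_subset K1)).union
    (simplexOn (effVerts K2) (effVerts_subset K2))

lemma le_wedgeL {K K1 K2 : SComplex S} {σ : Finset ℕ} (h : IsFaceSum K K1 K2 σ) :
    K.faces ⊆ (wedgeL K1 K2).faces := by
  intro τ hτ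
  rw [h.union] at hτ
  rcases hτ with hτ | hτ
  · exact Or.inl (face_subset_effVerts K1 hτ)
  · exact Or.inr (face_subset_effVerts K2 hτ)

/-! ### Reduced simplicial homology (augmented, ℤ coefficients) -/

/-- Faces of `K` with `k` vertices (so of dimension `k - 1`). -/
abbrev Face (K : SComplex S) (k : ℤ) : Type :=
  {σ : Finset ℕ // σ ∈ K.faces ∧ (σ.card : ℤ) = k}

/-- The group of augmented simplicial `ℤ`-chains of `K` spanned by faces with `k`
vertices (this is the chain group in homological degree `k - 1`; for `k = 0` it is
spanned by the empty face). -/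
abbrev Chains (K : SComplex S) (k : ℤ) : Type := Face K k →₀ ℤ

open Classical in
/-- The simplicial boundary map, sending a face `σ` with `j` vertices to the
alternating sum of its codimension-one subfaces (recorded in `Chains K k`;
it is the usual boundary when `k = j - 1`, and `0` otherwise). -/
noncomputable def bdry (K : SComplex S) (j k : ℤ) : Chains K j →+ Chains K k :=
  Finsupp.liftAddHom fun σ =>
    (zmultiplesHom (Chains K k)) (∑ x ∈ σ.1,
      ((-1 : ℤ) ^ ((σ.1.filter (fun y => y < x)).card)) •
        (if h : (σ.1.erase x ∈ K.faces ∧ (((σ.1.erase x).card : ℤ)) = k) then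
          Finsupp.single (⟨σ.1.erase x, h⟩ : Face K k) (1 : ℤ) else 0))

/-- The subgroup of reduced `n`-cycles. -/
noncomputable abbrev cycles (K : SComplex S) (n : ℤ) : AddSubgroup (Chains K (n + 1)) :=
  (bdry K (n + 1) n).ker

/-- The reduced `n`-boundaries, viewed inside the `n`-cycles. -/
noncomputable abbrev boundariesIn (K : SComplex S) (n : ℤ) : AddSubgroup (cycles K n) :=
  (bdry K (n + 2) (n + 1)).range.comap (cycles K n).subtype

/-- Reduced simplicial homology `H̃_n(K; ℤ)` of the simplicial complex `K`,
computed from the augmented simplicial chain complex. -/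
noncomputable abbrev RH (K : SComplex S) (n : ℤ) : Type :=
  cycles K n ⧸ boundariesIn K n

/-- The chain map induced by an inclusion of simplicial complexes. -/
noncomputable def chainMap {K1 K2 : SComplex S} (h : K1.faces ⊆ K2.faces) (k : ℤ) :
    Chains K1 k →+ Chains K2 k :=
  Finsupp.mapDomain.addMonoidHom (fun σ => (⟨σ.1, h σ.2.1, σ.2.2⟩ : Face K2 k))

open Classical in
lemma bdry_chainMap {K1 K2 : SComplex S} (h : K1.faces ⊆ K2.faces) (j k : ℤ) (c : Chains K1 j) :
    bdry K2 j k (chainMap h j c) = chainMap h k (bdry K1 j k c) := by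
  have hmap : ∀ (K1 K2 : SComplex S) (h : K1.faces ⊆ K2.faces) (k : ℤ) (a : Face K1 k) (b : ℤ),
      chainMap h k (Finsupp.single a b) =
        Finsupp.single (⟨a.1, h a.2.1, a.2.2⟩ : Face K2 k) b := by
    intro K1 K2 h k a b
    exact Finsupp.mapDomain_single
  induction c using Finsupp.induction_linear with
  | zero => simp
  | add f g hf hg => simp only [map_add, hf, hg]
  | single σ b =>
    rw [hmap, bdry, bdry, Finsupp.liftAddHom_apply_single, Finsupp.liftAddHom_apply_single,
      zmultiplesHom_apply, zmultiplesHom_apply, map_zsmul]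
    congr 1
    rw [map_sum]
    refine Finset.sum_congr rfl fun x hx => ?_
    rw [map_zsmul]
    congr 1
    by_cases hc : ((σ.1.erase x).card : ℤ) = k
    · have h1 : σ.1.erase x ∈ K1.faces ∧ ((σ.1.erase x).card : ℤ) = k :=
        ⟨K1.down_closed σ.2.1 (Finset.erase_subset _ _), hc⟩
      have h2 : σ.1.erase x ∈ K2.faces ∧ ((σ.1.erase x).card : ℤ) = k :=
        ⟨h h1.1, hc⟩
      rw [dif_pos h1, dif_pos h2, hmap]
    · have h1 : ¬(σ.1.erase x ∈ K1.faces ∧ ((σ.1.erase x).card : ℤ) = k) := fun h' => hc h'.2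
      have h2 : ¬(σ.1.erase x ∈ K2.faces ∧ ((σ.1.erase x).card : ℤ) = k) := fun h' => hc h'.2
      rw [dif_neg h1, dif_neg h2, map_zero]

/-- The map on cycles induced by an inclusion of simplicial complexes. -/
noncomputable def cycleMap {K1 K2 : SComplex S} (h : K1.faces ⊆ K2.faces) (n : ℤ) :
    cycles K1 n →+ cycles K2 n :=
  AddMonoidHom.codRestrict ((chainMap h (n + 1)).comp (cycles K1 n).subtype)
    (cycles K2 n) (by
      rintro ⟨x, hx⟩
      rw [AddMonoidHom.mem_ker]
      have hx0 : bdry K1 (n + 1) n x = 0 := hx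
      show bdry K2 (n + 1) n (chainMap h (n + 1) x) = 0
      rw [bdry_chainMap h, hx0, map_zero])

/-- The map `H̃_n(K¹) → H̃_n(K²)` induced by an inclusion `K¹ ⊆ K²` of
simplicial complexes. -/
noncomputable def inducedRH {K1 K2 : SComplex S} (h : K1.faces ⊆ K2.faces) (n : ℤ) :
    RH K1 n →+ RH K2 n :=
  QuotientAddGroup.map _ _ (cycleMap h n) (by
    rintro z hz
    obtain ⟨c, hc⟩ := hz
    refine ⟨chainMap h (n + 2) c, ?_⟩
    show bdry K2 (n + 2) (n + 1) (chainMap h (n + 2) c) = (cycleMap h n z : Chains K2 (n + 1))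
    rw [bdry_chainMap h]
    show chainMap h (n + 1) (bdry K1 (n + 2) (n + 1) c) = chainMap h (n + 1) (z : Chains K1 (n + 1))
    exact congrArg _ hc)

lemma cycleMap_comp {K1 K2 K3 : SComplex S} (h1 : K1.faces ⊆ K2.faces)
    (h2 : K2.faces ⊆ K3.faces) (n : ℤ) (z : cycles K1 n) :
    cycleMap h2 n (cycleMap h1 n z) = cycleMap (h1.trans h2) n z := by
  apply Subtype.ext
  show Finsupp.mapDomain _ (Finsupp.mapDomain _ (z : Chains K1 (n + 1))) = Finsupp.mapDomain _ _
  rw [← Finsupp.mapDomain_comp]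
  rfl

lemma inducedRH_comp {K1 K2 K3 : SComplex S} (h1 : K1.faces ⊆ K2.faces)
    (h2 : K2.faces ⊆ K3.faces) (n : ℤ) (a : RH K1 n) :
    inducedRH h2 n (inducedRH h1 n a) = inducedRH (h1.trans h2) n a := by
  induction a using QuotientAddGroup.induction_on with
  | H z =>
    show QuotientAddGroup.mk _ = QuotientAddGroup.mk _
    rw [cycleMap_comp]

lemma restrict_mono {K1 K2 : SComplex S} (h : K1.faces ⊆ K2.faces) (J : Finset ℕ) :
    (K1.restrict J).faces ⊆ (K2.restrict J).faces := by
  rintro τ ⟨σ, hσ, rfl⟩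
  exact ⟨σ, h hσ, rfl⟩

lemma restrict_le_insert (K : SComplex S) (x : ℕ) (J : Finset ℕ) :
    (K.restrict J).faces ⊆ (K.restrict (insert x J)).faces := by
  rintro τ ⟨σ, hσ, rfl⟩
  refine ⟨σ ∩ J, K.down_closed hσ Finset.inter_subset_left, ?_⟩
  exact (Finset.inter_eq_left.mpr
    (Finset.inter_subset_right.trans (Finset.subset_insert x J))).symm

/-! ### The double homology complex `CH` and double homology `HH` -/

/-- Index type: subsets `J ⊆ S` with `|J| = l`. -/
abbrev Idx (S : Finset ℕ) (l : ℤ) : Type := {J : Finset ℕ // J ⊆ S ∧ (J.card : ℤ) = l}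

/-- `CH_n^l(Z_K) = ⊕_{J ⊆ S, |J| = l} H̃_{n-1}(K_J)`. -/
noncomputable abbrev CH (K : SComplex S) (n l : ℤ) : Type :=
  ⨁ (J : Idx S l), RH (K.restrict J.1) (n - 1)

/-- The sign `ε(x, J) = (-1)^{#{j ∈ J : j < x}}`. -/
def eps (x : ℕ) (J : Finset ℕ) : ℤ := (-1 : ℤ) ^ ((J.filter (fun y => y < x)).card)

/-- The sign `(-1)^n` for `n : ℤ`. -/
def sgn (n : ℤ) : ℤ := (((-1 : ℤˣ) ^ n : ℤˣ) : ℤ)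

set_option maxHeartbeats 1000000 in
open Classical in
/-- The differential of the double homology complex: on the summand indexed by
`J` (with `|J| = l`) it is `(-1)^n Σ_{x ∈ S∖J} ε(x,J) φ_{J,x}`, where `φ_{J,x}`
is induced by the inclusion `K_J ↪ K_{J∪{x}}` (recorded in `CH K n l'`; it is
the actual differential when `l' = l + 1`, and `0` otherwise). -/
noncomputable def dCH (K : SComplex S) (n l l' : ℤ) : CH K n l →+ CH K n l' :=
  DirectSum.toAddMonoid fun J =>
    ∑ x ∈ S \ J.1,
      (sgn n * eps x J.1) •
        (if h : (insert x J.1 ⊆ S ∧ (((insert x J.1).card : ℤ)) = l') then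
          (DirectSum.of (fun J' : Idx S l' => RH (K.restrict J'.1) (n - 1))
              (⟨insert x J.1, h⟩ : Idx S l')).comp
            (inducedRH (restrict_le_insert K x J.1) (n - 1))
        else 0)

/-- The double homology `HH_n^l(Z_K)`: the `l`-th cohomology of `(CH_n^*(Z_K), d)`. -/
noncomputable abbrev HH (K : SComplex S) (n l : ℤ) : Type :=
  (dCH K n l (l + 1)).ker ⧸
    ((dCH K n (l - 1) l).range.comap (dCH K n l (l + 1)).ker.subtype)

set_option maxHeartbeats 1000000 in
/-- The map `CH_n^l(Z_{K¹}) → CH_n^l(Z_{K²})` induced by an inclusion `K¹ ⊆ K²`. -/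
noncomputable def CHmap {K1 K2 : SComplex S} (h : K1.faces ⊆ K2.faces) (n l : ℤ) :
    CH K1 n l →+ CH K2 n l :=
  DirectSum.toAddMonoid fun J =>
    (DirectSum.of (fun J' : Idx S l => RH (K2.restrict J'.1) (n - 1)) J).comp
      (inducedRH (restrict_mono h J.1) (n - 1))

set_option maxHeartbeats 2000000 in
open Classical in
/-- Naturality of the differential `d` with respect to inclusion-induced maps. -/
lemma CHmap_dCH {K1 K2 : SComplex S} (h : K1.faces ⊆ K2.faces) (n l l' : ℤ) :
    (CHmap h n l').comp (dCH K1 n l l') = (dCH K2 n l l').comp (CHmap h n l) := by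
  refine DirectSum.addHom_ext fun J a => ?_
  simp only [AddMonoidHom.comp_apply, dCH, CHmap, DirectSum.toAddMonoid_of]
  rw [AddMonoidHom.finset_sum_apply, AddMonoidHom.finset_sum_apply, map_sum]
  refine Finset.sum_congr rfl fun x hx => ?_
  rw [AddMonoidHom.smul_apply, AddMonoidHom.smul_apply, map_zsmul]
  congr 1
  by_cases hc : insert x J.1 ⊆ S ∧ ((insert x J.1).card : ℤ) = l'
  · rw [dif_pos hc, dif_pos hc]
    rw [AddMonoidHom.comp_apply, AddMonoidHom.comp_apply, DirectSum.toAddMonoid_of,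
      AddMonoidHom.comp_apply]
    congr 1
    rw [inducedRH_comp, inducedRH_comp]
  · rw [dif_neg hc, dif_neg hc]
    simp

set_option maxHeartbeats 2000000 in
/-- The map `HH_n^l(Z_{K¹}) → HH_n^l(Z_{K²})` induced by an inclusion `K¹ ⊆ K²`. -/
noncomputable def HHmap {K1 K2 : SComplex S} (h : K1.faces ⊆ K2.faces) (n l : ℤ) :
    HH K1 n l →+ HH K2 n l :=
  QuotientAddGroup.map _ _
    (AddMonoidHom.codRestrict
      ((CHmap h n l).comp (dCH K1 n l (l + 1)).ker.subtype)
      (dCH K2 n l (l + 1)).ker (by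
        rintro ⟨x, hx⟩
        rw [AddMonoidHom.mem_ker]
        have hx0 : dCH K1 n l (l + 1) x = 0 := hx
        show dCH K2 n l (l + 1) (CHmap h n l x) = 0
        have hnat := congrArg (fun f => f x) (CHmap_dCH h n l (l + 1))
        simp only [AddMonoidHom.comp_apply] at hnat
        rw [← hnat, hx0, map_zero]))
    (by
      rintro z hz
      obtain ⟨c, hc⟩ := hz
      refine ⟨CHmap h n (l - 1) c, ?_⟩
      have hnat := congrArg (fun f => f c) (CHmap_dCH h n (l - 1) l)
      simp only [AddMonoidHom.comp_apply] at hnat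
      show dCH K2 n (l - 1) l (CHmap h n (l - 1) c) = CHmap h n l ((z : CH K1 n l))
      rw [← hnat]
      exact congrArg _ hc)

/-! ### Path connectivity -/

/-- Two vertices are related if they span an edge of `K`. -/
def EdgeRel (K : SComplex S) (a b : ℕ) : Prop := ({a, b} : Finset ℕ) ∈ K.faces

/-- Reachability by a chain of edges. -/
def Reach (K : SComplex S) : ℕ → ℕ → Prop := Relation.ReflTransGen (EdgeRel K)

/-- `K` is path-connected: any two vertices are joined by a chain of edges. -/
def IsPathConnected (K : SComplex S) : Prop :=
  ∀ a b : ℕ, ({a} : Finset ℕ) ∈ K.faces → ({b} : Finset ℕ) ∈ K.faces → Reach K a b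

/-- The number of path components of `K` (equivalence classes of vertices under
the relation generated by sharing an edge). -/
noncomputable def numComponents (K : SComplex S) : ℕ :=
  Nat.card (Quot (fun a b : {x : ℕ // ({x} : Finset ℕ) ∈ K.faces} => Reach K a.1 b.1))


/-! A ghost vertex `x` is invisible to every full subcomplex: `K_{J ∖ {x}} = K_J`. Deleting `x`
from the index `J`, with the sign `(-1)^n ε(x, J ∖ {x})`, is therefore a well-defined map
`h : CH_n^l → CH_n^{l-1}`, and it is a contracting homotopy: `d h + h d = id`. On the summand of
`J ∌ x` only the term of `d` that adds `x` back survives `h`; on the summand of `J ∋ x` the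
term of `d h` that adds `x` back gives the identity, and the remaining terms of `d h` and `h d`
cancel in pairs because `ε(x, I) ε(y, I) = -ε(y, I ∪ {x}) ε(x, I ∪ {y})` for `x ≠ y`
outside `I`. -/

lemma subsingleton_homology_of_ker_le_range {A B C : Type*} [AddCommGroup A] [AddCommGroup B]
    [AddCommGroup C] (f : A →+ B) (g : B →+ C) (h : g.ker ≤ f.range) :
    Subsingleton (g.ker ⧸ f.range.comap g.ker.subtype) := by
  rw [show f.range.comap g.ker.subtype = ⊤ from eq_top_iff.mpr fun z _ => h z.2]
  exact QuotientAddGroup.subsingleton_quotient_top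

lemma chainMap_self {K : SComplex S} (h : K.faces ⊆ K.faces) (k : ℤ) (c : Chains K k) :
    chainMap h k c = c :=
  Finsupp.mapDomain_id

lemma inducedRH_self {K : SComplex S} (h : K.faces ⊆ K.faces) (n : ℤ) (a : RH K n) :
    inducedRH h n a = a := by
  induction a using QuotientAddGroup.induction_on with
  | H z => exact congrArg QuotientAddGroup.mk (Subtype.ext (chainMap_self h (n + 1) z))

lemma restrict_erase_faces {K : SComplex S} {x : ℕ} (hx : ({x} : Finset ℕ) ∉ K.faces)
    (J : Finset ℕ) : (K.restrict (J.erase x)).faces = (K.restrict J).faces := by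
  have inter_erase_eq : ∀ σ ∈ K.faces, σ ∩ J.erase x = σ ∩ J := fun σ hσ => by
    have hxσ : x ∉ σ := fun hxσ =>
      hx (K.down_closed hσ (Finset.singleton_subset_iff.mpr hxσ))
    rw [Finset.inter_erase,
      Finset.erase_eq_of_notMem fun h => hxσ (Finset.mem_of_mem_inter_left h)]
  ext τ
  exact exists_congr fun σ => and_congr_right fun hσ => by rw [inter_erase_eq σ hσ]

lemma eps_insert {x y : ℕ} {I : Finset ℕ} (hy : y ∉ I) :
    eps x (insert y I) = (if y < x then -1 else 1) * eps x I := by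
  unfold eps
  rw [Finset.filter_insert]
  split_ifs with hyx
  · rw [Finset.card_insert_of_notMem fun h => hy (Finset.mem_of_mem_filter _ h), pow_succ]
    ring
  · rw [one_mul]

lemma eps_mul_eps_insert_erase {x y : ℕ} {J : Finset ℕ} (hne : x ≠ y) (hx : x ∈ J)
    (hy : y ∉ J) :
    eps y J * eps x (insert y (J.erase x)) = -(eps x (J.erase x) * eps y (J.erase x)) := by
  have hyI : y ∉ J.erase x := fun h => hy (Finset.mem_of_mem_erase h)
  conv_lhs => arg 1; rw [← Finset.insert_erase hx]
  rw [eps_insert (Finset.notMem_erase x J), eps_insert hyI]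
  rcases hne.lt_or_gt with h | h
  · rw [if_pos h, if_neg h.asymm]; ring
  · rw [if_neg h.asymm, if_pos h]; ring

lemma sgn_mul_eps_mul_self (n : ℤ) (x : ℕ) (J : Finset ℕ) :
    (sgn n * eps x J) * (sgn n * eps x J) = 1 := by
  have hsgn : sgn n * sgn n = 1 := by
    rw [sgn, ← Units.val_mul, ← mul_zpow]; norm_num
  have heps : eps x J * eps x J = 1 := by
    rw [eps, ← mul_pow]; norm_num
  linear_combination eps x J * eps x J * hsgn + heps

abbrev IsIdx (S : Finset ℕ) (l : ℤ) (J : Finset ℕ) : Prop := J ⊆ S ∧ (J.card : ℤ) = l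

lemma IsIdx.insert {l : ℤ} {J : Finset ℕ} (hJ : IsIdx S l J) {y : ℕ} (hy : y ∈ S \ J) :
    IsIdx S (l + 1) (insert y J) := by
  rw [Finset.mem_sdiff] at hy
  refine ⟨Finset.insert_subset hy.1 hJ.1, ?_⟩
  rw [Finset.card_insert_of_notMem hy.2, Nat.cast_succ, hJ.2]

lemma IsIdx.erase {l : ℤ} {J : Finset ℕ} (hJ : IsIdx S l J) {x : ℕ} (hx : x ∈ J) :
    IsIdx S (l - 1) (J.erase x) := by
  refine ⟨(Finset.erase_subset x J).trans hJ.1, ?_⟩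
  rw [Finset.cast_card_erase_of_mem hx, hJ.2]

noncomputable abbrev CH.of (K : SComplex S) (n : ℤ) {l : ℤ} (J : Idx S l) :
    RH (K.restrict J.1) (n - 1) →+ CH K n l :=
  DirectSum.of (fun J : Idx S l => RH (K.restrict J.1) (n - 1)) J

section Summands

variable {n l : ℤ} {K : SComplex S} {A B : Finset ℕ}

lemma CH.of_inducedRH_of_eq (hAB : A = B) (hA : IsIdx S l A) (hB : IsIdx S l B)
    (h : (K.restrict B).faces ⊆ (K.restrict A).faces) (a : RH (K.restrict B) (n - 1)) :
    CH.of K n ⟨A, hA⟩ (inducedRH h (n - 1) a) = CH.of K n ⟨B, hB⟩ a := by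
  subst hAB
  rw [inducedRH_self]

lemma CH.smul_of_inducedRH_add_smul_of_inducedRH (hAB : A = B) (hA : IsIdx S l A)
    (hB : IsIdx S l B) {L : SComplex S} (h₁ : L.faces ⊆ (K.restrict A).faces)
    (h₂ : L.faces ⊆ (K.restrict B).faces) (a : RH L (n - 1)) {c₁ c₂ : ℤ} (hc : c₁ + c₂ = 0) :
    c₁ • CH.of K n ⟨A, hA⟩ (inducedRH h₁ (n - 1) a) +
      c₂ • CH.of K n ⟨B, hB⟩ (inducedRH h₂ (n - 1) a) = 0 := by
  subst hAB
  rw [← add_smul, hc, zero_smul]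

end Summands

noncomputable def ghostHomotopy (K : SComplex S) {x : ℕ} (hx : ({x} : Finset ℕ) ∉ K.faces)
    (n l l' : ℤ) : CH K n l →+ CH K n l' :=
  DirectSum.toAddMonoid fun J =>
    if h : x ∈ J.1 ∧ ((J.1.erase x).card : ℤ) = l' then
      (sgn n * eps x (J.1.erase x)) •
        (CH.of K n ⟨J.1.erase x, (Finset.erase_subset x J.1).trans J.2.1, h.2⟩).comp
          (inducedRH (restrict_erase_faces hx J.1).symm.subset (n - 1))
    else 0

section Generators

variable {n l : ℤ} {K : SComplex S} {J : Finset ℕ}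

lemma dCH_of (l' : ℤ) (hJ : IsIdx S l J) (a : RH (K.restrict J) (n - 1)) :
    dCH K n l l' (CH.of K n ⟨J, hJ⟩ a) =
      ∑ y ∈ S \ J, (sgn n * eps y J) •
        if h : insert y J ⊆ S ∧ ((insert y J).card : ℤ) = l' then
          CH.of K n ⟨insert y J, h⟩ (inducedRH (restrict_le_insert K y J) (n - 1) a)
        else 0 := by
  rw [dCH, CH.of, DirectSum.toAddMonoid_of, AddMonoidHom.finsetSum_apply]
  refine Finset.sum_congr rfl fun y _ => ?_
  rw [AddMonoidHom.smul_apply]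
  split_ifs <;> rfl

variable {x : ℕ} (hx : ({x} : Finset ℕ) ∉ K.faces)

lemma ghostHomotopy_of_mem {l' : ℤ} (hJ : IsIdx S l J) (hxJ : x ∈ J)
    (hJ' : IsIdx S l' (J.erase x)) (a : RH (K.restrict J) (n - 1)) :
    ghostHomotopy K hx n l l' (CH.of K n ⟨J, hJ⟩ a) =
      (sgn n * eps x (J.erase x)) • CH.of K n ⟨J.erase x, hJ'⟩
        (inducedRH (restrict_erase_faces hx J).symm.subset (n - 1) a) := by
  rw [ghostHomotopy, CH.of, DirectSum.toAddMonoid_of, dif_pos ⟨hxJ, hJ'.2⟩]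
  rfl

lemma ghostHomotopy_of_notMem (l' : ℤ) (hJ : IsIdx S l J) (hxJ : x ∉ J)
    (a : RH (K.restrict J) (n - 1)) :
    ghostHomotopy K hx n l l' (CH.of K n ⟨J, hJ⟩ a) = 0 := by
  rw [ghostHomotopy, CH.of, DirectSum.toAddMonoid_of, dif_neg fun h => hxJ h.1]
  rfl

lemma dCH_ghostHomotopy_add_ghostHomotopy_dCH_of_notMem (hxS : x ∈ S) (hJ : IsIdx S l J)
    (hxJ : x ∉ J) (a : RH (K.restrict J) (n - 1)) :
    dCH K n (l - 1) l (ghostHomotopy K hx n l (l - 1) (CH.of K n ⟨J, hJ⟩ a)) +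
      ghostHomotopy K hx n (l + 1) l (dCH K n l (l + 1) (CH.of K n ⟨J, hJ⟩ a)) =
      CH.of K n ⟨J, hJ⟩ a := by
  have hx_sdiff : x ∈ S \ J := Finset.mem_sdiff.mpr ⟨hxS, hxJ⟩
  rw [ghostHomotopy_of_notMem hx _ hJ hxJ, map_zero, zero_add, dCH_of, map_sum,
    Finset.sum_eq_single_of_mem x hx_sdiff]
  · rw [dif_pos (hJ.insert hx_sdiff), map_zsmul,
      ghostHomotopy_of_mem hx _ (Finset.mem_insert_self x J)
        (by rw [Finset.erase_insert hxJ]; exact hJ),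
      inducedRH_comp, CH.of_inducedRH_of_eq (Finset.erase_insert hxJ) _ hJ, smul_smul,
      Finset.erase_insert hxJ, sgn_mul_eps_mul_self, one_smul]
  · intro y hy hyx
    rw [dif_pos (hJ.insert hy), map_zsmul, ghostHomotopy_of_notMem hx, smul_zero]
    rw [Finset.mem_insert]
    rintro (rfl | h)
    exacts [hyx rfl, hxJ h]

lemma dCH_ghostHomotopy_add_ghostHomotopy_dCH_of_mem (hxS : x ∈ S) (hJ : IsIdx S l J)
    (hxJ : x ∈ J) (a : RH (K.restrict J) (n - 1)) :
    dCH K n (l - 1) l (ghostHomotopy K hx n l (l - 1) (CH.of K n ⟨J, hJ⟩ a)) +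
      ghostHomotopy K hx n (l + 1) l (dCH K n l (l + 1) (CH.of K n ⟨J, hJ⟩ a)) =
      CH.of K n ⟨J, hJ⟩ a := by
  have hxI : IsIdx S l (insert x (J.erase x)) := by rw [Finset.insert_erase hxJ]; exact hJ
  rw [ghostHomotopy_of_mem hx hJ hxJ (hJ.erase hxJ), map_zsmul, dCH_of, Finset.sdiff_erase hxS,
    Finset.sum_insert fun h => (Finset.mem_sdiff.mp h).2 hxJ, dif_pos hxI, inducedRH_comp,
    CH.of_inducedRH_of_eq (Finset.insert_erase hxJ) _ hJ, smul_add, smul_smul,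
    sgn_mul_eps_mul_self, one_smul, add_assoc, add_eq_left, dCH_of, map_sum, Finset.smul_sum,
    ← Finset.sum_add_distrib]
  refine Finset.sum_eq_zero fun y hy => ?_
  have hxy : x ≠ y := fun h => (Finset.mem_sdiff.mp hy).2 (h ▸ hxJ)
  have hyJ : IsIdx S (l + 1) (insert y J) := hJ.insert hy
  -- `(J ∪ {y}) ∖ {x} = (J ∖ {x}) ∪ {y}`: the term of `h d` matching the `y`-term of `d h`
  have hswap : insert y (J.erase x) = (insert y J).erase x :=
    (Finset.erase_insert_of_ne hxy.symm).symm
  have hyxJ : IsIdx S l ((insert y J).erase x) := by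
    simpa using hyJ.erase (Finset.mem_insert_of_mem hxJ)
  rw [dif_pos (hswap ▸ hyxJ), dif_pos hyJ, map_zsmul,
    ghostHomotopy_of_mem hx hyJ (Finset.mem_insert_of_mem hxJ) hyxJ, smul_smul, smul_smul,
    inducedRH_comp, inducedRH_comp]
  refine CH.smul_of_inducedRH_add_smul_of_inducedRH hswap _ _ _ _ _ ?_
  rw [← hswap]
  linear_combination
    sgn n * sgn n * eps_mul_eps_insert_erase hxy hxJ (Finset.mem_sdiff.mp hy).2

end Generators

theorem dCH_ghostHomotopy_add_ghostHomotopy_dCH (K : SComplex S) {x : ℕ} (hxS : x ∈ S)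
    (hx : ({x} : Finset ℕ) ∉ K.faces) (n l : ℤ) (c : CH K n l) :
    dCH K n (l - 1) l (ghostHomotopy K hx n l (l - 1) c) +
      ghostHomotopy K hx n (l + 1) l (dCH K n l (l + 1) c) = c := by
  induction c using DirectSum.induction_on with
  | zero => simp only [map_zero, add_zero]
  | of J a =>
    obtain ⟨J, hJ⟩ := J
    by_cases hxJ : x ∈ J
    · exact dCH_ghostHomotopy_add_ghostHomotopy_dCH_of_mem hx hxS hJ hxJ a
    · exact dCH_ghostHomotopy_add_ghostHomotopy_dCH_of_notMem hx hxS hJ hxJ a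
  | add c c' hc hc' => rw [map_add, map_add, map_add, map_add, add_add_add_comm, hc, hc']

/-- If a simplicial complex `K` has at least one ghost vertex then
its double homology vanishes: `HH_n^l(Z_K) = 0` for all integers `n`, `l`. -/
theorem doubleHomology_vanishes_of_ghostVertex (S : Finset ℕ) (K : SComplex S)
    (hg : ∃ x ∈ S, ({x} : Finset ℕ) ∉ K.faces) :
    ∀ n l : ℤ, Subsingleton (HH K n l) := by
  obtain ⟨x, hxS, hx⟩ := hg
  intro n l
  refine subsingleton_homology_of_ker_le_range _ _ fun c hc =>
    ⟨ghostHomotopy K hx n l (l - 1) c, ?_⟩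
  have homotopy := dCH_ghostHomotopy_add_ghostHomotopy_dCH K hxS hx n l c
  rwa [AddMonoidHom.mem_ker.mp hc, map_zero, add_zero] at homotopy

end DH
end

section
/- The bottom double homology group detects ghost vertices: for a simplicial complex K on [m], HH_{0,0}(Z_K) ≅ ℤ if and only if K has no ghost vertices, and HH_{0,0}(Z_K) = 0 otherwise. -/
set_option maxHeartbeats 1000000
set_option synthInstance.maxHeartbeats 1000000

open scoped DirectSum

namespace DH

variable {S : Finset ℕ}

/-!
`CH_0^0(Z_K) = H̃_{-1}(K_∅)` is `ℤ`, generated by the class of the empty face, and nothing maps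
into it, so `HH_{0,0}(Z_K)` is the kernel of `d` on it. The differential sends this generator to
the family of classes of the empty face in `H̃_{-1}(K_{x})`, `x ∈ S`. Such a class vanishes when
`{x}` is a face of `K`, being the boundary of `{x}`, and generates `H̃_{-1}({∅}) ≅ ℤ` when `x` is a
ghost vertex. So `d = 0` on `CH_0^0` if there are no ghost vertices, and `d` is injective
otherwise.
-/

section FullSubcomplex

variable (K : SComplex S)

lemma singleton_mem_restrict {x : ℕ} (hx : {x} ∈ K.faces) {J : Finset ℕ} (hxJ : x ∈ J) :
    {x} ∈ (K.restrict J).faces :=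
  ⟨{x}, hx, (Finset.inter_eq_left.mpr (Finset.singleton_subset_iff.mpr hxJ)).symm⟩

lemma eq_empty_of_mem_restrict_empty {τ : Finset ℕ} (hτ : τ ∈ (K.restrict ∅).faces) :
    τ = ∅ := by
  obtain ⟨σ, -, rfl⟩ := hτ
  exact Finset.inter_empty σ

lemma eq_empty_of_mem_restrict_singleton {x : ℕ} (hx : {x} ∉ K.faces) {τ : Finset ℕ}
    (hτ : τ ∈ (K.restrict {x}).faces) : τ = ∅ := by
  obtain ⟨σ, hσ, rfl⟩ := hτ
  refine Finset.eq_empty_of_forall_notMem fun y hy => hx ?_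
  obtain ⟨hyσ, hyx⟩ := Finset.mem_inter.mp hy
  rw [Finset.mem_singleton.mp hyx] at hyσ
  exact K.down_closed hσ (Finset.singleton_subset_iff.mpr hyσ)

end FullSubcomplex

section ReducedHomologyNegOne

variable (K : SComplex S)

instance : IsEmpty (Face K (0 - 1)) := ⟨fun σ => by have := σ.2.2; omega⟩

def emptyFace : Face K (0 - 1 + 1) := ⟨∅, K.empty_mem, by norm_num⟩

lemma eq_emptyFace (σ : Face K (0 - 1 + 1)) : σ = emptyFace K :=
  Subtype.ext (Finset.card_eq_zero.mp (by have := σ.2.2; omega))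

noncomputable def emptyCycle : cycles K (0 - 1) :=
  ⟨Finsupp.single (emptyFace K) 1, Subsingleton.elim _ _⟩

noncomputable def emptyClass : RH K (0 - 1) := QuotientAddGroup.mk (emptyCycle K)

lemma exists_eq_zsmul_emptyClass (a : RH K (0 - 1)) : ∃ n : ℤ, a = n • emptyClass K := by
  induction a using QuotientAddGroup.induction_on with
  | H z =>
    refine ⟨z.1 (emptyFace K), congrArg QuotientAddGroup.mk (Subtype.ext ?_)⟩
    ext σ
    rw [eq_emptyFace K σ]
    simp [emptyCycle]

lemma emptyClass_eq_zero_of_singleton_mem {x : ℕ} (hx : {x} ∈ K.faces) :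
    emptyClass K = 0 := by
  rw [emptyClass, QuotientAddGroup.eq_zero_iff, AddSubgroup.mem_comap]
  refine ⟨Finsupp.single ⟨{x}, hx, by norm_num⟩ 1, ?_⟩
  have hface : ({x} : Finset ℕ).erase x ∈ K.faces ∧
      ((({x} : Finset ℕ).erase x).card : ℤ) = 0 - 1 + 1 := by
    simpa using K.empty_mem
  simp only [bdry, Finsupp.liftAddHom_apply_single, zmultiplesHom_apply, one_zsmul,
    Finset.sum_singleton, dif_pos hface]
  simp [emptyCycle, emptyFace, Finset.filter_singleton]

lemma eq_zero_of_zsmul_emptyClass_eq_zero (hK : ∀ τ ∈ K.faces, τ = ∅) {n : ℤ}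
    (hn : n • emptyClass K = 0) : n = 0 := by
  have : IsEmpty (Face K (0 - 1 + 2)) := ⟨fun σ => by
    have hcard := σ.2.2
    rw [hK _ σ.2.1] at hcard
    simp at hcard⟩
  rw [emptyClass, ← QuotientAddGroup.mk_zsmul, QuotientAddGroup.eq_zero_iff] at hn
  obtain ⟨c, hc⟩ := hn
  rw [Subsingleton.elim c 0, map_zero] at hc
  simpa [emptyCycle] using congrArg (fun f : Chains K (0 - 1 + 1) => f (emptyFace K)) hc.symm

lemma inducedRH_emptyClass {K₁ K₂ : SComplex S} (h : K₁.faces ⊆ K₂.faces) :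
    inducedRH h (0 - 1) (emptyClass K₁) = emptyClass K₂ :=
  congrArg QuotientAddGroup.mk <| Subtype.ext <| Finsupp.mapDomain_single.trans rfl

end ReducedHomologyNegOne

section BottomDegree

variable (K : SComplex S)

instance : IsEmpty (Idx S (0 - 1)) := ⟨fun J => by have := J.2.2; omega⟩

def emptyIdx : Idx S 0 := ⟨∅, Finset.empty_subset S, by simp⟩

lemma eq_emptyIdx (J : Idx S 0) : J = emptyIdx :=
  Subtype.ext (Finset.card_eq_zero.mp (by have := J.2.2; omega))

noncomputable def emptyGen : CH K 0 0 :=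
  DirectSum.of (fun J : Idx S 0 => RH (K.restrict J.1) (0 - 1)) emptyIdx (emptyClass _)

lemma emptyGen_apply : emptyGen K emptyIdx = emptyClass (K.restrict ∅) :=
  DirectSum.of_eq_same _ _

lemma exists_eq_zsmul_emptyGen (c : CH K 0 0) : ∃ n : ℤ, c = n • emptyGen K := by
  obtain ⟨n, hn⟩ := exists_eq_zsmul_emptyClass _ (c emptyIdx)
  refine ⟨n, DFinsupp.ext fun J => ?_⟩
  rw [eq_emptyIdx J, DFinsupp.smul_apply, emptyGen_apply, hn]
  rfl

lemma zsmul_emptyGen_injective : Function.Injective (fun n : ℤ => n • emptyGen K) := by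
  refine (injective_iff_map_eq_zero (zmultiplesHom _ (emptyGen K))).mpr fun n hn => ?_
  exact eq_zero_of_zsmul_emptyClass_eq_zero _ (fun _ => eq_empty_of_mem_restrict_empty K)
    (congrArg (· emptyIdx) hn)

noncomputable def chZeroZeroEquivInt : CH K 0 0 ≃+ ℤ :=
  (AddEquiv.ofBijective (zmultiplesHom _ (emptyGen K))
    ⟨zsmul_emptyGen_injective K,
      fun c => (exists_eq_zsmul_emptyGen K c).imp fun _ h => h.symm⟩).symm

lemma dCH_emptyGen_apply (J : Idx S (0 + 1)) :
    dCH K 0 0 (0 + 1) (emptyGen K) J = emptyClass (K.restrict J.1) := by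
  obtain ⟨x, hJx⟩ := Finset.card_eq_one.mp (by have := J.2.2; omega : J.1.card = 1)
  have hidx : ∀ y ∈ S, insert y (emptyIdx : Idx S 0).1 ⊆ S ∧
      ((insert y (emptyIdx : Idx S 0).1).card : ℤ) = 0 + 1 :=
    fun y hy => ⟨by simpa [emptyIdx] using hy, by simp [emptyIdx]⟩
  have hsgn : ∀ y, sgn 0 * eps y (emptyIdx : Idx S 0).1 = 1 := fun y => by
    simp [sgn, eps, emptyIdx]
  have hx : x ∈ S := J.2.1 (hJx ▸ Finset.mem_singleton_self x)
  rw [emptyGen, dCH, DirectSum.toAddMonoid_of, AddMonoidHom.finsetSum_apply,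
    DFinsupp.finsetSum_apply, Finset.sum_eq_single x]
  · obtain rfl : J = ⟨_, hidx x hx⟩ := Subtype.ext (by simpa [emptyIdx] using hJx)
    rw [AddMonoidHom.smul_apply, hsgn, one_smul, dif_pos (hidx x hx), AddMonoidHom.comp_apply,
      inducedRH_emptyClass, DirectSum.of_eq_same]
  · intro y hy hyx
    have hy : y ∈ S := (Finset.mem_sdiff.mp hy).1
    rw [AddMonoidHom.smul_apply, hsgn, one_smul, dif_pos (hidx y hy), AddMonoidHom.comp_apply,
      DirectSum.of_eq_of_ne]
    intro hJy
    exact hyx (by simpa [hJx, emptyIdx] using (congrArg Subtype.val hJy).symm)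
  · exact fun hxS => absurd (by simpa [emptyIdx] using hx) hxS

lemma ker_dCH_zero_eq_top (hK : NoGhosts K) : (dCH K 0 0 (0 + 1)).ker = ⊤ := by
  have hgen : dCH K 0 0 (0 + 1) (emptyGen K) = 0 := DFinsupp.ext fun J => by
    obtain ⟨x, hJx⟩ := Finset.card_eq_one.mp (by have := J.2.2; omega : J.1.card = 1)
    have hxJ : x ∈ J.1 := hJx ▸ Finset.mem_singleton_self x
    rw [dCH_emptyGen_apply,
      emptyClass_eq_zero_of_singleton_mem _ (singleton_mem_restrict K (hK x (J.2.1 hxJ)) hxJ)]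
    rfl
  refine (AddSubgroup.eq_top_iff' _).mpr fun c => ?_
  obtain ⟨n, rfl⟩ := exists_eq_zsmul_emptyGen K c
  rw [AddMonoidHom.mem_ker, map_zsmul, hgen, smul_zero]

lemma ker_dCH_zero_eq_bot {x : ℕ} (hx : x ∈ S) (hg : {x} ∉ K.faces) :
    (dCH K 0 0 (0 + 1)).ker = ⊥ := by
  refine (AddSubgroup.eq_bot_iff_forall _).mpr fun c hc => ?_
  obtain ⟨n, rfl⟩ := exists_eq_zsmul_emptyGen K c
  have hJ : ({x} : Finset ℕ) ⊆ S ∧ (({x} : Finset ℕ).card : ℤ) = 0 + 1 := ⟨by simpa, by simp⟩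
  have hcomp : n • emptyClass (K.restrict (⟨{x}, hJ⟩ : Idx S (0 + 1)).1) = 0 := by
    rw [← dCH_emptyGen_apply, ← DFinsupp.smul_apply, ← map_zsmul, AddMonoidHom.mem_ker.mp hc]
    rfl
  rw [eq_zero_of_zsmul_emptyClass_eq_zero _ (fun _ => eq_empty_of_mem_restrict_singleton K hg)
    hcomp, zero_smul]

end BottomDegree

noncomputable def hhEquivKer (K : SComplex S) (n l : ℤ) [IsEmpty (Idx S (l - 1))] :
    HH K n l ≃+ (dCH K n l (l + 1)).ker :=
  (QuotientAddGroup.quotientAddEquivOfEq <| (AddSubgroup.eq_bot_iff_forall _).mpr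
    fun z hz => by
      obtain ⟨c, hc⟩ := AddSubgroup.mem_comap.mp hz
      rw [Subsingleton.elim c 0, map_zero] at hc
      exact Subtype.ext hc.symm).trans
    QuotientAddGroup.quotientBot

/-- `HH_{0,0}(Z_K)` detects ghost vertices: it is `≅ ℤ` iff `K`
has no ghost vertices, and it vanishes otherwise. -/
theorem HH00_detects_ghostVertices (m : ℕ) (K : SComplex (Finset.Icc 1 m)) :
    (Nonempty (HH K 0 0 ≃+ ℤ) ↔ NoGhosts K) ∧
    (¬ NoGhosts K → Subsingleton (HH K 0 0)) := by
  have hHH := hhEquivKer K 0 0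
  have vanishes : ¬ NoGhosts K → Subsingleton (HH K 0 0) := fun hK => by
    simp only [NoGhosts, not_forall, exists_prop] at hK
    obtain ⟨x, hx, hg⟩ := hK
    exact (hHH.trans (AddEquiv.addSubgroupCongr (ker_dCH_zero_eq_bot K hx hg))).toEquiv.subsingleton
  refine ⟨⟨fun ⟨e⟩ => by_contra fun hK => ?_, fun hK => ?_⟩, vanishes⟩
  · have := vanishes hK
    exact one_ne_zero (e.symm.injective (Subsingleton.elim _ _))
  · exact ⟨hHH.trans ((AddEquiv.addSubgroupCongr (ker_dCH_zero_eq_top K hK)).trans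
      (AddSubgroup.topEquiv.trans (chZeroZeroEquivInt K)))⟩

end DH
end

section
/- Let K = K¹ ⊔_σ K² be a wedge-decomposable simplicial complex on [m] with no ghost vertices, let ρ = V(K¹) and τ = V(K²) be the effective vertex sets, and let L = ⟨ρ⟩ ⊔_σ ⟨τ⟩. Then for each non-empty J ⊆ [m] and each n ≥ 0 there is a short exact sequence of abelian groups 0 → H̃_n(K¹_J) ⊕ H̃_n(K²_J) → H̃_n(K_J) → H̃_n(L_J) → 0, where the first map sends (x, y) to the sum of the images of x and y under the maps induced by the inclusions K¹_J ↪ K_J and K²_J ↪ K_J, and the second map is induced by the inclusion K_J ↪ L_J. -/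
set_option maxHeartbeats 1000000
set_option synthInstance.maxHeartbeats 1000000

open scoped DirectSum

namespace DH

variable {S : Finset ℕ}

/-!
All chains are compared inside the chains of the full simplex on `S`, where the chains of a
subcomplex are those supported on its faces. Two facts drive the argument. A full simplex is
acyclic, by the cone on one of its vertices. And if `∂C = X₁ + X₂` with `C` supported on `P ∪ Q`
and `Xᵢ` on the two pieces, splitting `C = C₁ + C₂` gives `X₁ = ∂C₁ + D`, `X₂ = ∂C₂ - D` with
`D` supported on `P ∩ Q`.

Write `A = K¹_J`, `B = K²_J`, so `K_J = A ∪ B` with `A ∩ B = ⟨σ ∩ J⟩`, and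
`L_J = ⟨r⟩ ∪ ⟨t⟩` with `r = V(A)`, `t = V(B)`. If `z₁ + z₂` bounds in `A ∪ B`, the correction `D`
is a cycle on the simplex `⟨σ ∩ J⟩`, hence a boundary there, and `z₁`, `z₂` bound in `A`, `B`:
injectivity. A cycle of `K_J` bounding in `L_J` splits against its bounding chain into the
boundaries `∂C₁` on `A` and `∂C₂` on `B`, because `⟨r⟩ ∩ ⟨t⟩ ⊆ A ∩ B`; conversely a cycle of `A`
already bounds in `⟨r⟩ ⊆ L_J`: exactness. Finally `H̃_n(L_J) = 0` for `n ≥ 1` (split a cycle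
along `⟨r⟩ ∩ ⟨t⟩ = ⟨r ∩ t⟩`), and every vertex of `L_J` is a vertex of `K_J`: surjectivity.
-/

lemma eps_erase_of_not_lt (t : Finset ℕ) {v x : ℕ} (h : ¬ v < x) : eps x (t.erase v) = eps x t := by
  rw [eps, eps, Finset.filter_erase, Finset.erase_eq_of_notMem (by simp [h])]

lemma eps_erase_of_lt {t : Finset ℕ} {v x : ℕ} (hv : v ∈ t) (h : v < x) :
    eps x (t.erase v) = -eps x t := by
  have hm : v ∈ t.filter (· < x) := Finset.mem_filter.mpr ⟨hv, h⟩
  rw [eps, eps, Finset.filter_erase, ← Finset.card_erase_add_one hm, pow_succ]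
  ring

lemma eps_insert_of_not_lt (t : Finset ℕ) {v x : ℕ} (h : ¬ v < x) :
    eps x (insert v t) = eps x t := by
  rw [eps, eps, Finset.filter_insert, if_neg h]

lemma eps_insert_of_lt {t : Finset ℕ} {v x : ℕ} (hv : v ∉ t) (h : v < x) :
    eps x (insert v t) = -eps x t := by
  have h' := eps_erase_of_lt (Finset.mem_insert_self v t) h
  rw [Finset.erase_insert hv] at h'
  rw [h', neg_neg]

lemma eps_mul_self (x : ℕ) (t : Finset ℕ) : eps x t * eps x t = 1 := by
  rw [eps, ← pow_add, Even.neg_one_pow ⟨_, rfl⟩]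

lemma eps_mul_eps_erase_swap {s : Finset ℕ} {x y : ℕ} (hx : x ∈ s) (hy : y ∈ s) (hxy : x ≠ y) :
    eps x s * eps y (s.erase x) = -(eps y s * eps x (s.erase y)) := by
  rcases hxy.lt_or_gt with h | h
  · rw [eps_erase_of_not_lt s h.not_gt, eps_erase_of_lt hx h]; ring
  · rw [eps_erase_of_not_lt s h.not_gt, eps_erase_of_lt hy h]; ring

lemma eps_mul_eps_insert_swap {s : Finset ℕ} {v x : ℕ} (hv : v ∉ s) (hx : x ∈ s) :
    eps v s * eps x (insert v s) = -(eps x s * eps v (s.erase x)) := by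
  rcases (show v ≠ x by rintro rfl; exact hv hx).lt_or_gt with h | h
  · rw [eps_insert_of_lt hv h, eps_erase_of_not_lt s h.not_gt]; ring
  · rw [eps_insert_of_not_lt s h.not_gt, eps_erase_of_lt hx h]; ring

lemma _root_.Finset.sum_sum_eq_zero_of_antisymm {α M : Type*} [AddCommGroup M] (s : Finset α)
    (f : α → α → M) (hanti : ∀ x ∈ s, ∀ y ∈ s, x ≠ y → f y x = -f x y)
    (hdiag : ∀ x ∈ s, f x x = 0) :
    ∑ x ∈ s, ∑ y ∈ s, f x y = 0 := by
  rw [← Finset.sum_product']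
  refine Finset.sum_involution (fun p _ => p.swap) (fun p hp => ?_) (fun p hp hne heq => ?_)
    (fun p hp => Finset.mem_product.mpr (Finset.mem_product.mp hp).symm) (fun p _ => p.swap_swap)
  · obtain ⟨hx, hy⟩ := Finset.mem_product.mp hp
    by_cases hxy : p.1 = p.2
    · rw [Prod.fst_swap, Prod.snd_swap, ← hxy, hdiag _ hx, add_zero]
    · rw [Prod.fst_swap, Prod.snd_swap, hanti _ hx _ hy hxy, add_neg_cancel]
  · have hxy : p.1 = p.2 := (Prod.ext_iff.mp heq).2
    exact hne (by rw [hxy]; exact hdiag _ (Finset.mem_product.mp hp).2)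

open Classical in
noncomputable def faceSingle (K : SComplex S) (k : ℤ) (τ : Finset ℕ) : Chains K k :=
  if h : τ ∈ K.faces ∧ (τ.card : ℤ) = k then Finsupp.single ⟨τ, h⟩ 1 else 0

lemma faceSingle_of_mem {K : SComplex S} {k : ℤ} {τ : Finset ℕ}
    (h : τ ∈ K.faces ∧ (τ.card : ℤ) = k) : faceSingle K k τ = Finsupp.single ⟨τ, h⟩ 1 :=
  dif_pos h

lemma faceSingle_of_card_ne (K : SComplex S) {k : ℤ} {τ : Finset ℕ} (h : (τ.card : ℤ) ≠ k) :
    faceSingle K k τ = 0 :=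
  dif_neg fun h' => h h'.2

lemma cast_card_erase {σ : Finset ℕ} {x : ℕ} (hx : x ∈ σ) {k : ℤ} (h : (σ.card : ℤ) = k) :
    ((σ.erase x).card : ℤ) = k - 1 := by
  rw [Finset.card_erase_of_mem hx, Nat.cast_sub (Finset.card_pos.mpr ⟨x, hx⟩), h, Nat.cast_one]

lemma cast_card_insert {σ : Finset ℕ} {x : ℕ} (hx : x ∉ σ) {k : ℤ} (h : (σ.card : ℤ) = k) :
    ((insert x σ).card : ℤ) = k + 1 := by
  rw [Finset.card_insert_of_notMem hx, Nat.cast_succ, h]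

lemma bdry_single (K : SComplex S) (j k : ℤ) (σ : Face K j) (b : ℤ) :
    bdry K j k (Finsupp.single σ b) = b • ∑ x ∈ σ.1, eps x σ.1 • faceSingle K k (σ.1.erase x) := by
  rw [bdry, Finsupp.liftAddHom_apply_single, zmultiplesHom_apply]
  rfl

lemma bdry_faceSingle {K : SComplex S} {j : ℤ} {σ : Finset ℕ} (hσ : σ ∈ K.faces)
    (hj : (σ.card : ℤ) = j) (k : ℤ) :
    bdry K j k (faceSingle K j σ) = ∑ x ∈ σ, eps x σ • faceSingle K k (σ.erase x) := by
  rw [faceSingle_of_mem ⟨hσ, hj⟩, bdry_single, one_smul]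

lemma bdry_apply_eq_zero (K : SComplex S) {j k : ℤ} (h : k ≠ j - 1) (c : Chains K j) :
    bdry K j k c = 0 := by
  induction c using Finsupp.induction_linear with
  | zero => exact map_zero _
  | add f g hf hg => rw [map_add, hf, hg, add_zero]
  | single σ b =>
    rw [bdry_single, Finset.sum_eq_zero, smul_zero]
    intro x hx
    rw [faceSingle_of_card_ne K (by rw [cast_card_erase hx σ.2.2]; exact fun h' => h h'.symm),
      smul_zero]

lemma bdry_bdry_faceSingle {K : SComplex S} {i : ℤ} {σ : Finset ℕ} (hσ : σ ∈ K.faces)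
    (hi : (σ.card : ℤ) = i) :
    bdry K (i - 1) (i - 1 - 1) (bdry K i (i - 1) (faceSingle K i σ)) = 0 := by
  have hface : ∀ x ∈ σ, σ.erase x ∈ K.faces ∧ ((σ.erase x).card : ℤ) = i - 1 := fun x hx =>
    ⟨K.down_closed hσ (Finset.erase_subset x σ), cast_card_erase hx hi⟩
  have hdiag : ∀ x ∈ σ, ∀ a : ℤ, a • faceSingle K (i - 1 - 1) ((σ.erase x).erase x) = 0 :=
    fun x hx a => by
      rw [Finset.erase_idem, faceSingle_of_card_ne K (by rw [(hface x hx).2]; omega), smul_zero]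
  rw [bdry_faceSingle hσ hi, map_sum]
  calc ∑ x ∈ σ, bdry K (i - 1) (i - 1 - 1) (eps x σ • faceSingle K (i - 1) (σ.erase x))
      = ∑ x ∈ σ, ∑ y ∈ σ,
          (eps x σ * eps y (σ.erase x)) • faceSingle K (i - 1 - 1) ((σ.erase x).erase y) := by
        refine Finset.sum_congr rfl fun x hx => ?_
        rw [map_zsmul, bdry_faceSingle (hface x hx).1 (hface x hx).2, Finset.smul_sum,
          ← Finset.sum_erase σ (hdiag x hx _)]
        exact Finset.sum_congr rfl fun y _ => smul_smul _ _ _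
    _ = 0 := by
        refine Finset.sum_sum_eq_zero_of_antisymm σ _ (fun x hx y hy hxy => ?_)
          fun x hx => hdiag x hx _
        rw [eps_mul_eps_erase_swap hx hy hxy, neg_smul, Finset.erase_right_comm, neg_neg]

lemma bdry_bdry (K : SComplex S) (i j k : ℤ) (c : Chains K i) :
    bdry K j k (bdry K i j c) = 0 := by
  rcases eq_or_ne j (i - 1) with rfl | hij
  swap
  · rw [bdry_apply_eq_zero K hij c, map_zero]
  rcases eq_or_ne k (i - 1 - 1) with rfl | hjk
  swap
  · exact bdry_apply_eq_zero K hjk _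
  induction c using Finsupp.induction_linear with
  | zero => simp only [map_zero]
  | add f g hf hg => rw [map_add, map_add, hf, hg, add_zero]
  | single σ b =>
    rw [← Finsupp.smul_single_one, map_zsmul, map_zsmul,
      ← faceSingle_of_mem σ.2, bdry_bdry_faceSingle σ.2.1 σ.2.2, smul_zero]

lemma chainMap_injective {K1 K2 : SComplex S} (h : K1.faces ⊆ K2.faces) (k : ℤ) :
    Function.Injective (chainMap h k) :=
  Finsupp.mapDomain_injective fun _ _ hab => Subtype.ext (congrArg Subtype.val hab :)

lemma chainMap_chainMap {K1 K2 K3 : SComplex S} (h1 : K1.faces ⊆ K2.faces)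
    (h2 : K2.faces ⊆ K3.faces) (k : ℤ) (c : Chains K1 k) :
    chainMap h2 k (chainMap h1 k c) = chainMap (h1.trans h2) k c :=
  (Finsupp.mapDomain_comp ..).symm

noncomputable def fullSimplex (S : Finset ℕ) : SComplex S := simplexOn S subset_rfl

lemma faces_subset_fullSimplex (K : SComplex S) : K.faces ⊆ (fullSimplex S).faces :=
  fun _ h => K.faces_subset h

noncomputable def toFull (K : SComplex S) (k : ℤ) : Chains K k →+ Chains (fullSimplex S) k :=
  chainMap (faces_subset_fullSimplex K) k

lemma toFull_injective (K : SComplex S) (k : ℤ) : Function.Injective (toFull K k) :=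
  chainMap_injective _ k

lemma toFull_chainMap {K1 K2 : SComplex S} (h : K1.faces ⊆ K2.faces) (k : ℤ) (c : Chains K1 k) :
    toFull K2 k (chainMap h k c) = toFull K1 k c :=
  chainMap_chainMap h _ k c

lemma bdry_toFull (K : SComplex S) (j k : ℤ) (c : Chains K j) :
    bdry (fullSimplex S) j k (toFull K j c) = toFull K k (bdry K j k c) :=
  bdry_chainMap _ j k c

noncomputable def supportedOn (T : Set (Finset ℕ)) (k : ℤ) :
    AddSubgroup (Chains (fullSimplex S) k) :=
  (Finsupp.supported ℤ ℤ {p : Face (fullSimplex S) k | p.1 ∈ T}).toAddSubgroup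

lemma mem_supportedOn {T : Set (Finset ℕ)} {k : ℤ} {c : Chains (fullSimplex S) k} :
    c ∈ supportedOn T k ↔ ∀ p ∈ c.support, p.1 ∈ T :=
  Finsupp.mem_supported ℤ c

lemma supportedOn_mono {T T' : Set (Finset ℕ)} (h : T ⊆ T') (k : ℤ) :
    supportedOn T k ≤ supportedOn (S := S) T' k :=
  fun _ hc => mem_supportedOn.mpr fun p hp => h (mem_supportedOn.mp hc p hp)

lemma exists_add_eq_of_mem_supportedOn_union {T₁ T₂ : Set (Finset ℕ)} {k : ℤ}
    {c : Chains (fullSimplex S) k} (hc : c ∈ supportedOn (T₁ ∪ T₂) k) :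
    ∃ c₁ ∈ supportedOn T₁ k, ∃ c₂ ∈ supportedOn T₂ k, c₁ + c₂ = c :=
  Submodule.mem_sup.mp ((Finsupp.supported_union _ _).le hc)

lemma mem_supportedOn_inter {T₁ T₂ : Set (Finset ℕ)} {k : ℤ} {c : Chains (fullSimplex S) k}
    (h₁ : c ∈ supportedOn T₁ k) (h₂ : c ∈ supportedOn T₂ k) : c ∈ supportedOn (T₁ ∩ T₂) k :=
  mem_supportedOn.mpr fun p hp => ⟨mem_supportedOn.mp h₁ p hp, mem_supportedOn.mp h₂ p hp⟩

lemma eq_zero_of_mem_supportedOn {T : Set (Finset ℕ)} {k : ℤ} (hT : ∀ τ ∈ T, (τ.card : ℤ) ≠ k)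
    {c : Chains (fullSimplex S) k} (hc : c ∈ supportedOn T k) : c = 0 := by
  ext p
  by_contra hp
  exact hT p.1 (mem_supportedOn.mp hc p (Finsupp.mem_support_iff.mpr hp)) p.2.2

lemma faceSingle_mem_supportedOn {T : Set (Finset ℕ)} {k : ℤ} {τ : Finset ℕ} (hτ : τ ∈ T) :
    faceSingle (fullSimplex S) k τ ∈ supportedOn T k := by
  unfold faceSingle
  split_ifs
  · exact Finsupp.single_mem_supported ℤ _ hτ
  · exact zero_mem _

lemma map_mem_supportedOn {T T' : Set (Finset ℕ)} {j k : ℤ}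
    (f : Chains (fullSimplex S) j →+ Chains (fullSimplex S) k)
    (hf : ∀ σ : Face (fullSimplex S) j, σ.1 ∈ T → f (Finsupp.single σ 1) ∈ supportedOn T' k)
    {c : Chains (fullSimplex S) j} (hc : c ∈ supportedOn T j) : f c ∈ supportedOn T' k := by
  rw [supportedOn, Submodule.mem_toAddSubgroup, Finsupp.supported_eq_span_single] at hc
  induction hc using Submodule.span_induction with
  | mem x hx =>
    obtain ⟨σ, hσ, rfl⟩ := hx
    exact hf σ hσ
  | zero => rw [map_zero]; exact zero_mem _
  | add x y _ _ hx hy => rw [map_add]; exact add_mem hx hy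
  | smul a x _ hx => rw [map_zsmul]; exact zsmul_mem hx a

lemma bdry_mem_supportedOn (K : SComplex S) {j k : ℤ} {c : Chains (fullSimplex S) j}
    (hc : c ∈ supportedOn K.faces j) : bdry (fullSimplex S) j k c ∈ supportedOn K.faces k := by
  refine map_mem_supportedOn _ (fun σ hσ => ?_) hc
  rw [bdry_single, one_smul]
  exact sum_mem fun x _ =>
    zsmul_mem (faceSingle_mem_supportedOn (K.down_closed hσ (Finset.erase_subset x σ.1))) _

lemma toFull_mem_supportedOn (K : SComplex S) {k : ℤ} (d : Chains K k) :
    toFull K k d ∈ supportedOn K.faces k := by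
  refine mem_supportedOn.mpr fun p hp => ?_
  classical
  obtain ⟨q, _, rfl⟩ := Finset.mem_image.mp (Finsupp.mapDomain_support hp)
  exact q.2.1

lemma exists_toFull_eq {K : SComplex S} {k : ℤ} {c : Chains (fullSimplex S) k}
    (hc : c ∈ supportedOn K.faces k) : ∃ d : Chains K k, toFull K k d = c := by
  set f : Face K k → Face (fullSimplex S) k :=
    fun σ => ⟨σ.1, faces_subset_fullSimplex K σ.2.1, σ.2.2⟩
  have hf : Function.Injective f := fun _ _ hab => Subtype.ext (congrArg Subtype.val hab :)
  refine ⟨Finsupp.comapDomain f c hf.injOn, Finsupp.mapDomain_comapDomain f hf c fun p hp => ?_⟩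
  exact ⟨⟨p.1, mem_supportedOn.mp hc p hp, p.2.2⟩, rfl⟩

open Classical in
noncomputable def cone (v : ℕ) (j k : ℤ) : Chains (fullSimplex S) j →+ Chains (fullSimplex S) k :=
  Finsupp.liftAddHom fun σ => zmultiplesHom _
    (if v ∈ σ.1 then 0 else eps v σ.1 • faceSingle (fullSimplex S) k (insert v σ.1))

open Classical in
lemma cone_single (v : ℕ) (j k : ℤ) (σ : Face (fullSimplex S) j) (b : ℤ) :
    cone v j k (Finsupp.single σ b) =
      b • if v ∈ σ.1 then 0 else eps v σ.1 • faceSingle (fullSimplex S) k (insert v σ.1) := by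
  rw [cone, Finsupp.liftAddHom_apply_single, zmultiplesHom_apply]

open Classical in
lemma cone_faceSingle (v : ℕ) {j : ℤ} {σ : Finset ℕ} (hσ : σ ⊆ S) (hj : (σ.card : ℤ) = j)
    (k : ℤ) : cone v j k (faceSingle (fullSimplex S) j σ) =
      if v ∈ σ then 0 else eps v σ • faceSingle (fullSimplex S) k (insert v σ) := by
  rw [faceSingle_of_mem (K := fullSimplex S) ⟨hσ, hj⟩, cone_single, one_smul]

lemma bdry_cone_add_cone_bdry_of_mem {v : ℕ} {k : ℤ} {σ : Finset ℕ} (hσ : σ ⊆ S)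
    (hk : (σ.card : ℤ) = k) (hv : v ∈ σ) (j : ℤ) :
    bdry (fullSimplex S) j k (cone v k j (faceSingle (fullSimplex S) k σ)) +
      cone v (k - 1) k (bdry (fullSimplex S) k (k - 1) (faceSingle (fullSimplex S) k σ)) =
      faceSingle (fullSimplex S) k σ := by
  have hσx : ∀ x ∈ σ, σ.erase x ⊆ S := fun x _ => (Finset.erase_subset x σ).trans hσ
  rw [cone_faceSingle v hσ hk, if_pos hv, map_zero, zero_add, bdry_faceSingle hσ hk, map_sum,
    Finset.sum_eq_single_of_mem v hv, map_zsmul, cone_faceSingle v (hσx v hv)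
      (cast_card_erase hv hk), if_neg (Finset.notMem_erase v σ), Finset.insert_erase hv,
    eps_erase_of_not_lt σ (lt_irrefl v), smul_smul, eps_mul_self, one_smul]
  intro x hx hxv
  rw [map_zsmul, cone_faceSingle v (hσx x hx) (cast_card_erase hx hk),
    if_pos (Finset.mem_erase.mpr ⟨Ne.symm hxv, hv⟩), smul_zero]

lemma bdry_cone_add_cone_bdry_of_notMem {v : ℕ} (hvS : v ∈ S) {k : ℤ} {σ : Finset ℕ}
    (hσ : σ ⊆ S) (hk : (σ.card : ℤ) = k) (hv : v ∉ σ) :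
    bdry (fullSimplex S) (k + 1) k (cone v k (k + 1) (faceSingle (fullSimplex S) k σ)) +
      cone v (k - 1) k (bdry (fullSimplex S) k (k - 1) (faceSingle (fullSimplex S) k σ)) =
      faceSingle (fullSimplex S) k σ := by
  rw [cone_faceSingle v hσ hk, if_neg hv, map_zsmul,
    bdry_faceSingle (Finset.insert_subset hvS hσ) (cast_card_insert hv hk), Finset.sum_insert hv,
    Finset.erase_insert hv, eps_insert_of_not_lt σ (lt_irrefl v), smul_add, smul_smul,
    eps_mul_self, one_smul, bdry_faceSingle hσ hk, map_sum, add_assoc, Finset.smul_sum,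
    ← Finset.sum_add_distrib, Finset.sum_eq_zero, add_zero]
  intro x hx
  have hxv : v ≠ x := fun h => hv (h ▸ hx)
  rw [map_zsmul, cone_faceSingle v ((Finset.erase_subset x σ).trans hσ) (cast_card_erase hx hk),
    if_neg fun h => hv (Finset.mem_of_mem_erase h), smul_smul, smul_smul,
    Finset.erase_insert_of_ne hxv, ← add_smul, eps_mul_eps_insert_swap hv hx, neg_add_cancel,
    zero_smul]

lemma bdry_cone_add_cone_bdry {v : ℕ} (hv : v ∈ S) {k j l : ℤ} (hj : j = k + 1)
    (hl : l = k - 1) (c : Chains (fullSimplex S) k) :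
    bdry (fullSimplex S) j k (cone v k j c) + cone v l k (bdry (fullSimplex S) k l c) = c := by
  subst hj hl
  induction c using Finsupp.induction_linear with
  | zero => simp only [map_zero, add_zero]
  | add f g hf hg => simp only [map_add]; rw [add_add_add_comm, hf, hg]
  | single σ b =>
    rw [← Finsupp.smul_single_one, map_zsmul, map_zsmul, map_zsmul, map_zsmul, ← smul_add,
      ← faceSingle_of_mem σ.2]
    by_cases hvσ : v ∈ σ.1
    · rw [bdry_cone_add_cone_bdry_of_mem σ.2.1 σ.2.2 hvσ]
    · rw [bdry_cone_add_cone_bdry_of_notMem hv σ.2.1 σ.2.2 hvσ]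

lemma cone_mem_supportedOn {t : Finset ℕ} {v : ℕ} (hv : v ∈ t) {j k : ℤ}
    {c : Chains (fullSimplex S) j} (hc : c ∈ supportedOn {τ | τ ⊆ t} j) :
    cone v j k c ∈ supportedOn {τ | τ ⊆ t} k := by
  refine map_mem_supportedOn _ (fun σ hσ => ?_) hc
  rw [cone_single, one_smul]
  split_ifs
  · exact zero_mem _
  · exact zsmul_mem (faceSingle_mem_supportedOn (Finset.insert_subset hv hσ)) _

/-- Acyclicity of a full simplex; in degree `-1` (chains with `k = 0` vertices) it needs `t ≠ ∅`. -/
lemma exists_bdry_eq_of_mem_supportedOn_simplex {t : Finset ℕ} (ht : t ⊆ S) {k j l : ℤ}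
    (hj : j = k + 1) (hl : l = k - 1) (hk : 1 ≤ k ∨ t.Nonempty)
    {c : Chains (fullSimplex S) k} (hc : c ∈ supportedOn {τ | τ ⊆ t} k)
    (hcyc : bdry (fullSimplex S) k l c = 0) :
    ∃ u ∈ supportedOn {τ | τ ⊆ t} j, bdry (fullSimplex S) j k u = c := by
  rcases t.eq_empty_or_nonempty with rfl | ⟨v, hv⟩
  · refine ⟨0, zero_mem _, ?_⟩
    rw [map_zero, eq_zero_of_mem_supportedOn (fun τ hτ => ?_) hc]
    rw [Finset.subset_empty.mp hτ, Finset.card_empty]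
    simp only [Finset.not_nonempty_empty, or_false] at hk
    omega
  · refine ⟨cone v k j c, cone_mem_supportedOn hv hc, ?_⟩
    simpa [hcyc] using bdry_cone_add_cone_bdry (ht hv) hj hl c

lemma toFull_cycleMap {K1 K2 : SComplex S} (h : K1.faces ⊆ K2.faces) {n : ℤ} (z : cycles K1 n) :
    toFull K2 (n + 1) (cycleMap h n z : Chains K2 (n + 1)) = toFull K1 (n + 1) z :=
  toFull_chainMap h (n + 1) z

lemma bdry_toFull_cycle {K : SComplex S} {n : ℤ} (z : cycles K n) :
    bdry (fullSimplex S) (n + 1) n (toFull K (n + 1) z) = 0 := by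
  rw [bdry_toFull, AddMonoidHom.mem_ker.mp z.2, map_zero]

lemma mk_eq_zero_iff {K : SComplex S} {n : ℤ} (z : cycles K n) :
    (QuotientAddGroup.mk z : RH K n) = 0 ↔
      ∃ C ∈ supportedOn K.faces (n + 2),
        bdry (fullSimplex S) (n + 2) (n + 1) C = toFull K (n + 1) z := by
  rw [QuotientAddGroup.eq_zero_iff, AddSubgroup.mem_comap, AddMonoidHom.mem_range]
  constructor
  · rintro ⟨c, hc⟩
    exact ⟨toFull K (n + 2) c, toFull_mem_supportedOn K c, by rw [bdry_toFull, hc]; rfl⟩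
  · rintro ⟨C, hC, hbd⟩
    obtain ⟨c, rfl⟩ := exists_toFull_eq hC
    exact ⟨c, toFull_injective K (n + 1) (by rw [← bdry_toFull, hbd]; rfl)⟩

lemma exists_toFull_cycle_eq {K : SComplex S} {n : ℤ} {Z : Chains (fullSimplex S) (n + 1)}
    (hZ : Z ∈ supportedOn K.faces (n + 1)) (hcyc : bdry (fullSimplex S) (n + 1) n Z = 0) :
    ∃ z : cycles K n, toFull K (n + 1) z = Z := by
  obtain ⟨d, rfl⟩ := exists_toFull_eq hZ
  refine ⟨⟨d, ?_⟩, rfl⟩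
  exact toFull_injective K n (by rw [← bdry_toFull, hcyc, map_zero])

lemma inducedRH_mk {K1 K2 : SComplex S} (h : K1.faces ⊆ K2.faces) {n : ℤ} (z : cycles K1 n) :
    inducedRH h n (QuotientAddGroup.mk z) = QuotientAddGroup.mk (cycleMap h n z) :=
  rfl

lemma exists_bdry_add_of_bdry_eq_add (P Q : SComplex S) {j k : ℤ}
    {C : Chains (fullSimplex S) j} (hC : C ∈ supportedOn (P.faces ∪ Q.faces) j)
    {X₁ X₂ : Chains (fullSimplex S) k} (hX₁ : X₁ ∈ supportedOn P.faces k)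
    (hX₂ : X₂ ∈ supportedOn Q.faces k) (hbd : bdry (fullSimplex S) j k C = X₁ + X₂) :
    ∃ C₁ ∈ supportedOn P.faces j, ∃ C₂ ∈ supportedOn Q.faces j,
      ∃ D ∈ supportedOn (P.faces ∩ Q.faces) k,
        X₁ = bdry (fullSimplex S) j k C₁ + D ∧ X₂ = bdry (fullSimplex S) j k C₂ - D := by
  obtain ⟨C₁, hC₁, C₂, hC₂, rfl⟩ := exists_add_eq_of_mem_supportedOn_union hC
  rw [map_add] at hbd
  have hD : X₁ - bdry (fullSimplex S) j k C₁ = bdry (fullSimplex S) j k C₂ - X₂ := by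
    rw [sub_eq_sub_iff_add_eq_add, ← hbd, add_comm]
  refine ⟨C₁, hC₁, C₂, hC₂, X₁ - bdry (fullSimplex S) j k C₁,
    mem_supportedOn_inter (sub_mem hX₁ (bdry_mem_supportedOn P hC₁)) ?_, by abel, ?_⟩
  · rw [hD]
    exact sub_mem (bdry_mem_supportedOn Q hC₂) hX₂
  · rw [hD]
    abel

theorem injective_coprod_inducedRH {K A B : SComplex S} {s : Finset ℕ}
    (hU : K.faces = A.faces ∪ B.faces) (hI : A.faces ∩ B.faces = {τ | τ ⊆ s})
    (hA : A.faces ⊆ K.faces) (hB : B.faces ⊆ K.faces) {n : ℤ} (hn : 0 ≤ n) :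
    Function.Injective ((inducedRH hA n).coprod (inducedRH hB n)) := by
  have hsAB : {τ | τ ⊆ s} ⊆ A.faces ∩ B.faces := hI.symm.subset
  have hs : s ⊆ S := A.faces_subset (hsAB (subset_rfl : s ⊆ s)).1
  rw [injective_iff_map_eq_zero]
  rintro ⟨a, b⟩ hab
  obtain ⟨z₁, rfl⟩ := QuotientAddGroup.mk_surjective a
  obtain ⟨z₂, rfl⟩ := QuotientAddGroup.mk_surjective b
  rw [AddMonoidHom.coprod_apply, inducedRH_mk, inducedRH_mk, ← QuotientAddGroup.mk_add,
    mk_eq_zero_iff, AddSubgroup.coe_add, map_add, toFull_cycleMap, toFull_cycleMap, hU] at hab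
  obtain ⟨C, hC, hbd⟩ := hab
  obtain ⟨C₁, hC₁, C₂, hC₂, D, hD, hX₁, hX₂⟩ := exists_bdry_add_of_bdry_eq_add A B hC
    (toFull_mem_supportedOn A (z₁ : Chains A (n + 1)))
    (toFull_mem_supportedOn B (z₂ : Chains B (n + 1))) hbd
  have hDcyc : bdry (fullSimplex S) (n + 1) n D = 0 := by
    have := congrArg (bdry (fullSimplex S) (n + 1) n) hX₁
    rwa [map_add, bdry_bdry, zero_add, bdry_toFull_cycle, eq_comm] at this
  rw [hI] at hD
  obtain ⟨u, hu, rfl⟩ := exists_bdry_eq_of_mem_supportedOn_simplex hs (j := n + 2)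
    (by ring) (by ring) (Or.inl (by omega)) hD hDcyc
  refine Prod.ext ((mk_eq_zero_iff z₁).mpr ⟨C₁ + u, ?_, ?_⟩)
    ((mk_eq_zero_iff z₂).mpr ⟨C₂ - u, ?_, ?_⟩)
  · exact add_mem hC₁ (supportedOn_mono (fun τ hτ => (hsAB hτ).1) _ hu)
  · rw [map_add, hX₁]
  · exact sub_mem hC₂ (supportedOn_mono (fun τ hτ => (hsAB hτ).2) _ hu)
  · rw [map_sub, hX₂]

open Classical in
lemma mem_effVerts {K : SComplex S} {x : ℕ} :
    x ∈ effVerts K ↔ x ∈ S ∧ ({x} : Finset ℕ) ∈ K.faces := by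
  simp [effVerts]

lemma mem_inter_of_subset_effVerts {A B : SComplex S} {s : Finset ℕ}
    (hI : A.faces ∩ B.faces = {τ | τ ⊆ s}) {τ : Finset ℕ} (hA : τ ⊆ effVerts A)
    (hB : τ ⊆ effVerts B) : τ ∈ A.faces ∩ B.faces := by
  rw [hI]
  intro x hx
  have hxAB : {x} ∈ A.faces ∩ B.faces :=
    ⟨(mem_effVerts.mp (hA hx)).2, (mem_effVerts.mp (hB hx)).2⟩
  rw [hI] at hxAB
  exact Finset.singleton_subset_iff.mp hxAB

lemma inducedRH_eq_zero_of_subset_simplex {A L : SComplex S} {r : Finset ℕ}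
    (hAr : A.faces ⊆ {τ | τ ⊆ r}) (hrL : {τ | τ ⊆ r} ⊆ L.faces) (h : A.faces ⊆ L.faces)
    {n : ℤ} (hn : 0 ≤ n) : inducedRH h n = 0 := by
  ext z
  rw [AddMonoidHom.zero_comp, AddMonoidHom.zero_apply, AddMonoidHom.comp_apply,
    QuotientAddGroup.mk'_apply, inducedRH_mk, mk_eq_zero_iff, toFull_cycleMap]
  obtain ⟨u, hu, hbd⟩ := exists_bdry_eq_of_mem_supportedOn_simplex
    (L.faces_subset (hrL (subset_rfl : r ⊆ r))) (j := n + 2) (by ring) (by ring)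
    (Or.inl (by omega)) (supportedOn_mono hAr _ (toFull_mem_supportedOn A _))
    (bdry_toFull_cycle z)
  exact ⟨u, supportedOn_mono hrL _ hu, hbd⟩

theorem exact_coprod_inducedRH_wedgeL {K A B L : SComplex S} {s : Finset ℕ}
    (hU : K.faces = A.faces ∪ B.faces) (hI : A.faces ∩ B.faces = {τ | τ ⊆ s})
    (hL : L.faces = (wedgeL A B).faces) (hA : A.faces ⊆ K.faces) (hB : B.faces ⊆ K.faces)
    (hKL : K.faces ⊆ L.faces) {n : ℤ} (hn : 0 ≤ n) :
    Function.Exact ((inducedRH hA n).coprod (inducedRH hB n)) (inducedRH hKL n) := by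
  have hrL : {τ | τ ⊆ effVerts A} ⊆ L.faces := hL ▸ Set.subset_union_left
  have htL : {τ | τ ⊆ effVerts B} ⊆ L.faces := hL ▸ Set.subset_union_right
  intro y
  constructor
  · obtain ⟨z, rfl⟩ := QuotientAddGroup.mk_surjective y
    rw [inducedRH_mk, mk_eq_zero_iff, toFull_cycleMap]
    rintro ⟨C, hC, hbd⟩
    obtain ⟨Z₁, hZ₁, Z₂, hZ₂, hZ⟩ :=
      exists_add_eq_of_mem_supportedOn_union (hU ▸ toFull_mem_supportedOn K (z : Chains K (n + 1)))
    rw [hL] at hC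
    obtain ⟨C₁, hC₁, C₂, hC₂, D, hD, hX₁, hX₂⟩ := exists_bdry_add_of_bdry_eq_add
      (simplexOn _ (effVerts_subset A)) (simplexOn _ (effVerts_subset B)) hC
      (supportedOn_mono (fun _ => face_subset_effVerts A) _ hZ₁)
      (supportedOn_mono (fun _ => face_subset_effVerts B) _ hZ₂) (hbd.trans hZ.symm)
    replace hD := supportedOn_mono (fun τ hτ => mem_inter_of_subset_effVerts hI hτ.1 hτ.2) _ hD
    obtain ⟨w₁, hw₁⟩ := exists_toFull_cycle_eq (K := A) (Z := Z₁ - D)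
      (sub_mem hZ₁ (supportedOn_mono Set.inter_subset_left _ hD))
      (by rw [hX₁, add_sub_cancel_right, bdry_bdry])
    obtain ⟨w₂, hw₂⟩ := exists_toFull_cycle_eq (K := B) (Z := Z₂ + D)
      (add_mem hZ₂ (supportedOn_mono Set.inter_subset_right _ hD))
      (by rw [hX₂, sub_add_cancel, bdry_bdry])
    refine ⟨(QuotientAddGroup.mk w₁, QuotientAddGroup.mk w₂), ?_⟩
    rw [AddMonoidHom.coprod_apply, inducedRH_mk, inducedRH_mk, ← QuotientAddGroup.mk_add]
    congr 1
    refine Subtype.ext (toFull_injective K (n + 1) ?_)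
    rw [AddSubgroup.coe_add, map_add, toFull_cycleMap, toFull_cycleMap, hw₁, hw₂, ← hZ]
    abel
  · rintro ⟨x, rfl⟩
    rw [AddMonoidHom.coprod_apply, map_add, inducedRH_comp, inducedRH_comp,
      inducedRH_eq_zero_of_subset_simplex (fun _ => face_subset_effVerts A) hrL _ hn,
      inducedRH_eq_zero_of_subset_simplex (fun _ => face_subset_effVerts B) htL _ hn,
      AddMonoidHom.zero_apply, AddMonoidHom.zero_apply, add_zero]

lemma exists_cycles_add_eq_of_mem_supportedOn_union_simplex {r t : Finset ℕ} (hr : r ⊆ S)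
    (ht : t ⊆ S) {n : ℤ} (hn : 1 ≤ n) {Z : Chains (fullSimplex S) (n + 1)}
    (hZ : Z ∈ supportedOn ({τ | τ ⊆ r} ∪ {τ | τ ⊆ t}) (n + 1))
    (hcyc : bdry (fullSimplex S) (n + 1) n Z = 0) :
    ∃ Z₁ ∈ supportedOn {τ | τ ⊆ r} (n + 1), ∃ Z₂ ∈ supportedOn {τ | τ ⊆ t} (n + 1),
      bdry (fullSimplex S) (n + 1) n Z₁ = 0 ∧ bdry (fullSimplex S) (n + 1) n Z₂ = 0 ∧
        Z₁ + Z₂ = Z := by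
  obtain ⟨Z₁, hZ₁, Z₂, hZ₂, rfl⟩ := exists_add_eq_of_mem_supportedOn_union hZ
  have hW : bdry (fullSimplex S) (n + 1) n Z₁ = -bdry (fullSimplex S) (n + 1) n Z₂ :=
    eq_neg_of_add_eq_zero_left (by rw [← map_add, hcyc])
  have hWs : bdry (fullSimplex S) (n + 1) n Z₁ ∈ supportedOn {τ | τ ⊆ r ∩ t} n :=
    supportedOn_mono (fun τ hτ => Finset.subset_inter hτ.1 hτ.2) _ <| mem_supportedOn_inter
      (bdry_mem_supportedOn (simplexOn r hr) hZ₁)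
      (hW ▸ neg_mem (bdry_mem_supportedOn (simplexOn t ht) hZ₂))
  obtain ⟨u, hu, hbd⟩ := exists_bdry_eq_of_mem_supportedOn_simplex
    (Finset.inter_subset_left.trans hr) rfl rfl (Or.inl hn) hWs (bdry_bdry _ _ _ _ Z₁)
  refine ⟨Z₁ - u, sub_mem hZ₁ (supportedOn_mono (fun τ hτ => ?_) _ hu),
    Z₂ + u, add_mem hZ₂ (supportedOn_mono (fun τ hτ => ?_) _ hu), ?_, ?_, by abel⟩
  · exact Finset.Subset.trans hτ Finset.inter_subset_left
  · exact Finset.Subset.trans hτ Finset.inter_subset_right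
  · rw [map_sub, hbd, sub_self]
  · rw [map_add, hbd, hW, add_neg_cancel]

theorem subsingleton_RH_of_faces_eq_union_simplex {L : SComplex S} {r t : Finset ℕ}
    (hL : L.faces = {τ | τ ⊆ r} ∪ {τ | τ ⊆ t}) {n : ℤ} (hn : 1 ≤ n) : Subsingleton (RH L n) := by
  have hr : r ⊆ S := L.faces_subset (hL ▸ Or.inl (subset_rfl : r ⊆ r))
  have ht : t ⊆ S := L.faces_subset (hL ▸ Or.inr (subset_rfl : t ⊆ t))
  suffices h : ∀ y : RH L n, y = 0 from ⟨fun a b => (h a).trans (h b).symm⟩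
  intro y
  obtain ⟨z, rfl⟩ := QuotientAddGroup.mk_surjective y
  rw [mk_eq_zero_iff]
  obtain ⟨Z₁, hZ₁, Z₂, hZ₂, hcyc₁, hcyc₂, hZ⟩ :=
    exists_cycles_add_eq_of_mem_supportedOn_union_simplex hr ht hn
      (hL ▸ toFull_mem_supportedOn L (z : Chains L (n + 1))) (bdry_toFull_cycle z)
  obtain ⟨D₁, hD₁, hbd₁⟩ := exists_bdry_eq_of_mem_supportedOn_simplex hr (j := n + 2)
    (by ring) (by ring) (Or.inl (by omega)) hZ₁ hcyc₁
  obtain ⟨D₂, hD₂, hbd₂⟩ := exists_bdry_eq_of_mem_supportedOn_simplex ht (j := n + 2)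
    (by ring) (by ring) (Or.inl (by omega)) hZ₂ hcyc₂
  refine ⟨D₁ + D₂, add_mem ?_ ?_, by rw [map_add, hbd₁, hbd₂, hZ]⟩
  · exact supportedOn_mono (hL ▸ Set.subset_union_left) _ hD₁
  · exact supportedOn_mono (hL ▸ Set.subset_union_right) _ hD₂

lemma surjective_inducedRH_zero {K L : SComplex S} (h : K.faces ⊆ L.faces)
    (hv : ∀ x : ℕ, {x} ∈ L.faces → {x} ∈ K.faces) : Function.Surjective (inducedRH h 0) := by
  intro y
  obtain ⟨z', rfl⟩ := QuotientAddGroup.mk_surjective y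
  have hZ : toFull L (0 + 1) (z' : Chains L (0 + 1)) ∈ supportedOn K.faces (0 + 1) := by
    refine mem_supportedOn.mpr fun p hp => ?_
    obtain ⟨x, hx⟩ := Finset.card_eq_one.mp (by have := p.2.2; omega : p.1.card = 1)
    rw [hx]
    exact hv x (hx ▸ mem_supportedOn.mp (toFull_mem_supportedOn L _) p hp)
  obtain ⟨z, hz⟩ := exists_toFull_cycle_eq hZ (bdry_toFull_cycle z')
  refine ⟨QuotientAddGroup.mk z, ?_⟩
  rw [inducedRH_mk]
  exact congrArg _ (Subtype.ext (toFull_injective L _ (by rw [toFull_cycleMap, hz])))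

theorem surjective_inducedRH_wedgeL {K A B L : SComplex S} (hU : K.faces = A.faces ∪ B.faces)
    (hL : L.faces = (wedgeL A B).faces) (hKL : K.faces ⊆ L.faces) {n : ℤ} (hn : 0 ≤ n) :
    Function.Surjective (inducedRH hKL n) := by
  rcases hn.eq_or_lt with rfl | hn
  · refine surjective_inducedRH_zero hKL fun x hx => ?_
    rw [hL] at hx
    rw [hU]
    rcases hx with hx | hx
    · exact Or.inl (mem_effVerts.mp (Finset.singleton_subset_iff.mp hx)).2
    · exact Or.inr (mem_effVerts.mp (Finset.singleton_subset_iff.mp hx)).2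
  · have := subsingleton_RH_of_faces_eq_union_simplex hL (n := n) (by omega)
    exact fun y => ⟨0, Subsingleton.elim _ _⟩

namespace SComplex

lemma mem_restrict_iff {K : SComplex S} {J τ : Finset ℕ} :
    τ ∈ (K.restrict J).faces ↔ τ ∈ K.faces ∧ τ ⊆ J := by
  constructor
  · rintro ⟨σ, hσ, rfl⟩
    exact ⟨K.down_closed hσ Finset.inter_subset_left, Finset.inter_subset_right⟩
  · rintro ⟨hτ, hJ⟩
    exact ⟨τ, hτ, (Finset.inter_eq_left.mpr hJ).symm⟩

lemma restrict_faces_eq_union {K A B : SComplex S} (h : K.faces = A.faces ∪ B.faces)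
    (J : Finset ℕ) : (K.restrict J).faces = (A.restrict J).faces ∪ (B.restrict J).faces := by
  ext τ
  simp only [Set.mem_union, mem_restrict_iff, h, or_and_right]

lemma restrict_faces_inter {A B : SComplex S} {s : Finset ℕ}
    (h : A.faces ∩ B.faces = {τ | τ ⊆ s}) (J : Finset ℕ) :
    (A.restrict J).faces ∩ (B.restrict J).faces = {τ | τ ⊆ s ∩ J} := by
  ext τ
  have hτ := Set.ext_iff.mp h τ
  simp only [Set.mem_inter_iff, Set.mem_ofPred_eq, mem_restrict_iff, Finset.subset_inter_iff]
    at hτ ⊢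
  tauto

end SComplex

open SComplex

open Classical in
lemma effVerts_restrict (K : SComplex S) (J : Finset ℕ) :
    effVerts (K.restrict J) = effVerts K ∩ J := by
  ext x
  simp only [Finset.mem_inter, mem_effVerts, mem_restrict_iff, Finset.singleton_subset_iff,
    and_assoc]

lemma restrict_wedgeL (A B : SComplex S) (J : Finset ℕ) :
    ((wedgeL A B).restrict J).faces = (wedgeL (A.restrict J) (B.restrict J)).faces := by
  ext τ
  rw [mem_restrict_iff]
  change (τ ⊆ effVerts A ∨ τ ⊆ effVerts B) ∧ τ ⊆ J ↔
    τ ⊆ effVerts (A.restrict J) ∨ τ ⊆ effVerts (B.restrict J)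
  rw [effVerts_restrict, effVerts_restrict, Finset.subset_inter_iff, Finset.subset_inter_iff,
    or_and_right]

theorem ses_of_faceSum_general (m : ℕ) (K K1 K2 : SComplex (Finset.Icc 1 m)) (σ : Finset ℕ)
    (hK : IsFaceSum K K1 K2 σ)
    (J : Finset ℕ) (n : ℤ) (hn : 0 ≤ n) :
    Function.Injective
      ⇑((inducedRH (restrict_mono hK.le1 J) n).coprod (inducedRH (restrict_mono hK.le2 J) n)) ∧
    Function.Exact
      ⇑((inducedRH (restrict_mono hK.le1 J) n).coprod (inducedRH (restrict_mono hK.le2 J) n))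
      ⇑(inducedRH (restrict_mono (le_wedgeL hK) J) n) ∧
    Function.Surjective ⇑(inducedRH (restrict_mono (le_wedgeL hK) J) n) := by
  have hU := restrict_faces_eq_union hK.union J
  have hI := restrict_faces_inter hK.inter J
  have hL := restrict_wedgeL K1 K2 J
  exact ⟨injective_coprod_inducedRH hU hI _ _ hn,
    exact_coprod_inducedRH_wedgeL hU hI hL _ _ _ hn, surjective_inducedRH_wedgeL hU hL _ hn⟩

/-- For a wedge-decomposable `K = K¹ ⊔_σ K²` on `[m]` with no
ghost vertices and `L = ⟨V(K¹)⟩ ⊔_σ ⟨V(K²)⟩`, for every non-empty `J ⊆ [m]` and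
every `n ≥ 0` there is a short exact sequence
`0 → H̃_n(K¹_J) ⊕ H̃_n(K²_J) → H̃_n(K_J) → H̃_n(L_J) → 0`,
where the first map is the sum of the inclusion-induced maps and the second map
is induced by the inclusion `K_J ↪ L_J`. -/
theorem ses_of_faceSum (m : ℕ) (K K1 K2 : SComplex (Finset.Icc 1 m)) (σ : Finset ℕ)
    (hK : IsFaceSum K K1 K2 σ) (hng : NoGhosts K)
    (J : Finset ℕ) (hJ : J ⊆ Finset.Icc 1 m) (hJne : J.Nonempty) (n : ℤ) (hn : 0 ≤ n) :
    Function.Injective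
      ⇑((inducedRH (restrict_mono hK.le1 J) n).coprod (inducedRH (restrict_mono hK.le2 J) n)) ∧
    Function.Exact
      ⇑((inducedRH (restrict_mono hK.le1 J) n).coprod (inducedRH (restrict_mono hK.le2 J) n))
      ⇑(inducedRH (restrict_mono (le_wedgeL hK) J) n) ∧
    Function.Surjective ⇑(inducedRH (restrict_mono (le_wedgeL hK) J) n) :=
  ses_of_faceSum_general m K K1 K2 σ hK J n hn

end DH
end
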